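/- arXiv:0905.0489 — 7 statements merged into one kernel-verified Lean document; each statement's English description precedes it below -/
import Mathlib

section
/- The children of a numerical semigroup Λ in the semigroup tree (i.e., the numerical semigroups Λ' ⊂ Λ with Λ' ∪ {Frobenius number of Λ'} = Λ) are exactly the sets Λ \ {μ} where μ ranges over the effective generators of Λ (minimal generators greater than the Frobenius number of Λ). -/
def IsNumericalSemigroup (Λ : Set ℕ) : Prop :=
  0 ∈ Λ ∧ (∀ a ∈ Λ, ∀ b ∈ Λ, a + b ∈ Λ) ∧ Λᶜ.Finite

noncomputable def sgGenus (Λ : Set ℕ) : ℕ := Λᶜ.ncard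

noncomputable def sgFrobenius (Λ : Set ℕ) : ℕ := sSup Λᶜ

noncomputable def sgMultiplicity (Λ : Set ℕ) : ℕ := sInf (Λ \ {0})

def IsMinimalGenerator (Λ : Set ℕ) (μ : ℕ) : Prop :=
  μ ∈ Λ ∧ μ ≠ 0 ∧ ¬ ∃ a ∈ Λ, ∃ b ∈ Λ, a ≠ 0 ∧ b ≠ 0 ∧ a + b = μ

def IsEffectiveGenerator (Λ : Set ℕ) (μ : ℕ) : Prop :=
  IsMinimalGenerator Λ μ ∧ sgFrobenius Λ < μ

def IsOrdinary (Λ : Set ℕ) : Prop := ∃ m : ℕ, Λ = {0} ∪ {n : ℕ | m ≤ n}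

def IsStrongGenerator (Λ : Set ℕ) (μ : ℕ) : Prop :=
  IsEffectiveGenerator Λ μ ∧ IsMinimalGenerator (Λ \ {μ}) (sgMultiplicity Λ + μ)

def IsChildOf (Λ' Λ : Set ℕ) : Prop :=
  IsNumericalSemigroup Λ' ∧ Λ' ⊂ Λ ∧ Λ' ∪ {sgFrobenius Λ'} = Λ

def sgDescendants (Λ : Set ℕ) : Set (Set ℕ) :=
  {Λ' | Relation.TransGen IsChildOf Λ' Λ}

theorem stmt6 (Λ : Set ℕ) (hΛ : IsNumericalSemigroup Λ) (Λ' : Set ℕ) :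
    (IsNumericalSemigroup Λ' ∧ Λ' ⊂ Λ ∧ Λ' ∪ {sgFrobenius Λ'} = Λ) ↔
    (∃ μ : ℕ, IsEffectiveGenerator Λ μ ∧ Λ' = Λ \ {μ}) := by
  constructor
  · rintro ⟨hΛ', hsub, hun⟩
    obtain ⟨x, hxΛ, hxΛ'⟩ := Set.exists_of_ssubset hsub
    set F := sgFrobenius Λ' with hF
    have hFnotin : F ∉ Λ' := Nat.sSup_mem ⟨x, hxΛ'⟩ hΛ'.2.2.bddAbove
    have hFmem : F ∈ Λ := by
      rw [← hun]; exact Or.inr rfl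
    have hF0 : F ≠ 0 := fun h => hFnotin (h ▸ hΛ'.1)
    have hmemΛ' : ∀ n, n ∈ Λ → n ≠ F → n ∈ Λ' := by
      intro n hn hne
      rw [← hun] at hn
      rcases hn with h | h
      · exact h
      · exact absurd h hne
    refine ⟨F, ⟨⟨hFmem, hF0, ?_⟩, ?_⟩, ?_⟩
    · rintro ⟨a, ha, b, hb, ha0, hb0, hab⟩
      have haF : a ≠ F := by omega
      have hbF : b ≠ F := by omega
      have : a + b ∈ Λ' := hΛ'.2.1 a (hmemΛ' a ha haF) b (hmemΛ' b hb hbF)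
      rw [hab] at this; exact hFnotin this
    · rcases Set.eq_empty_or_nonempty Λᶜ with he | hne
      · have : sgFrobenius Λ = 0 := by
          simp [sgFrobenius, he]
        omega
      · have h1 : sgFrobenius Λ ∈ Λᶜ := Nat.sSup_mem hne hΛ.2.2.bddAbove
        have h2 : sgFrobenius Λ ∈ Λ'ᶜ := fun h => h1 (hsub.1 h)
        have h3 : sgFrobenius Λ ≤ F := le_csSup hΛ'.2.2.bddAbove h2
        have h4 : sgFrobenius Λ ≠ F := fun h => h1 (h ▸ hFmem)
        omega
    · ext n
      constructor
      · intro hn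
        exact ⟨hsub.1 hn, fun h => hFnotin ((Set.mem_singleton_iff.mp h) ▸ hn)⟩
      · rintro ⟨hn, hne⟩
        exact hmemΛ' n hn (fun h => hne (Set.mem_singleton_iff.mpr h))
  · rintro ⟨μ, ⟨⟨hμΛ, hμ0, hμmin⟩, hμF⟩, rfl⟩
    have hcompl : (Λ \ {μ})ᶜ = Λᶜ ∪ {μ} := by
      ext n
      simp only [Set.mem_compl_iff, Set.mem_diff, Set.mem_singleton_iff, Set.mem_union]
      by_cases h : n = μ <;> simp [h]
    have hbdd : BddAbove (Λ \ {μ})ᶜ := by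
      rw [hcompl]
      exact (hΛ.2.2.union (Set.finite_singleton μ)).bddAbove
    have hFrob : sgFrobenius (Λ \ {μ}) = μ := by
      have hle : sgFrobenius (Λ \ {μ}) ≤ μ := by
        apply csSup_le ⟨μ, by rw [hcompl]; exact Or.inr rfl⟩
        intro n hn
        rw [hcompl] at hn
        rcases hn with h | h
        · have : n ≤ sgFrobenius Λ := le_csSup hΛ.2.2.bddAbove h
          omega
        · exact le_of_eq h
      have hge : μ ≤ sgFrobenius (Λ \ {μ}) :=
        le_csSup hbdd (by rw [hcompl]; exact Or.inr rfl)
      omega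
    refine ⟨⟨?_, ?_, ?_⟩, ?_, ?_⟩
    · exact ⟨hΛ.1, fun h => hμ0 (Set.mem_singleton_iff.mp h).symm⟩
    · intro a ha b hb
      refine ⟨hΛ.2.1 a ha.1 b hb.1, ?_⟩
      intro habμ
      have habμ' : a + b = μ := Set.mem_singleton_iff.mp habμ
      rcases Nat.eq_zero_or_pos a with h0 | h0
      · exact hb.2 (by simp [h0] at habμ'; simp [habμ'])
      rcases Nat.eq_zero_or_pos b with h0' | h0'
      · exact ha.2 (by simp [h0'] at habμ'; simp [habμ'])
      exact hμmin ⟨a, ha.1, b, hb.1, by omega, by omega, habμ'⟩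
    · rw [hcompl]
      exact hΛ.2.2.union (Set.finite_singleton μ)
    · constructor
      · exact Set.diff_subset
      · intro h
        exact (h hμΛ).2 rfl
    · rw [hFrob]
      ext n
      simp only [Set.mem_union, Set.mem_diff, Set.mem_singleton_iff]
      constructor
      · rintro (⟨h, _⟩ | h)
        · exact h
        · exact h ▸ hμΛ
      · intro h
        by_cases hn : n = μ
        · exact Or.inr hn
        · exact Or.inl ⟨h, hn⟩
end

section
/- Let Λ be a non-ordinary numerical semigroup with multiplicity λ₁ and let μ be an effective generator of Λ. If λ₁ + μ is a minimal generator of Λ \\ {μ} (i.e., μ is strong), then the effective generators of Λ \\ {μ} are the effective generators of Λ larger than μ together with λ₁ + μ. If μ is not strong (weak), the effective generators of Λ \\ {μ} are exactly the effective generators of Λ larger than μ. -/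
theorem stmt8 (Λ : Set ℕ) (hΛ : IsNumericalSemigroup Λ) (hord : ¬ IsOrdinary Λ)
    (μ : ℕ) (hμ : IsEffectiveGenerator Λ μ) :
    (IsStrongGenerator Λ μ →
      {ν : ℕ | IsEffectiveGenerator (Λ \ {μ}) ν} =
        {ν : ℕ | IsEffectiveGenerator Λ ν ∧ μ < ν} ∪ {sgMultiplicity Λ + μ}) ∧
    (¬ IsStrongGenerator Λ μ →
      {ν : ℕ | IsEffectiveGenerator (Λ \ {μ}) ν} =
        {ν : ℕ | IsEffectiveGenerator Λ ν ∧ μ < ν}) := by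
  obtain ⟨h0, hadd, hfin⟩ := hΛ
  have hbdd : BddAbove Λᶜ := hfin.bddAbove
  have hcne : Λᶜ.Nonempty := by
    rcases Set.eq_empty_or_nonempty Λᶜ with h | h
    · exfalso; apply hord
      refine ⟨0, ?_⟩
      have hU : Λ = Set.univ := by rwa [← Set.compl_empty_iff]
      ext n; simp [hU]
    · exact h
  set f := sgFrobenius Λ with hf
  have hfs : f = sSup Λᶜ := rfl
  have hmemgt : ∀ n : ℕ, f < n → n ∈ Λ := by
    intro n hn
    by_contra hn'
    exact absurd (le_csSup hbdd hn') (by omega)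
  set m := sgMultiplicity Λ with hm
  have hmne : (Λ \ {0}).Nonempty := ⟨f + 1, hmemgt _ (by omega), by simp⟩
  have hmmem : m ∈ Λ \ {0} := Nat.sInf_mem hmne
  have hmle : ∀ n ∈ Λ, n ≠ 0 → m ≤ n := fun n hn hn0 => Nat.sInf_le ⟨hn, hn0⟩
  have hm0 : m ≠ 0 := hmmem.2
  have hmΛ : m ∈ Λ := hmmem.1
  have hmf : m ≤ f := by
    by_contra hmf
    push_neg at hmf
    apply hord
    refine ⟨m, ?_⟩
    ext n
    simp only [Set.mem_union, Set.mem_singleton_iff, Set.mem_setOf_eq]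
    constructor
    · intro hn
      rcases eq_or_ne n 0 with h | h
      · exact Or.inl h
      · exact Or.inr (hmle n hn h)
    · rintro (rfl | h)
      · exact h0
      · exact hmemgt n (by omega)
  obtain ⟨⟨hμΛ, hμ0, hμmin⟩, hμf⟩ := hμ
  have hμnot' : μ ∈ (Λ \ {μ})ᶜ := by simp
  have hub : ∀ x ∈ (Λ \ {μ})ᶜ, x ≤ μ := by
    intro x hx
    simp only [Set.mem_compl_iff, Set.mem_diff, Set.mem_singleton_iff, not_and, not_not] at hx
    by_contra hxμ
    push_neg at hxμ
    have hxΛ : x ∈ Λ := hmemgt x (by omega)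
    exact absurd (hx hxΛ) (by omega)
  have hfrob' : sgFrobenius (Λ \ {μ}) = μ := by
    unfold sgFrobenius
    exact le_antisymm (csSup_le ⟨μ, hμnot'⟩ hub) (le_csSup ⟨μ, hub⟩ hμnot')
  have key : ∀ ν : ℕ, IsEffectiveGenerator (Λ \ {μ}) ν ↔
      ((IsEffectiveGenerator Λ ν ∧ μ < ν) ∨
       (ν = m + μ ∧ IsMinimalGenerator (Λ \ {μ}) (m + μ))) := by
    intro ν
    constructor
    · rintro ⟨⟨hνΛ', hν0, hνmin⟩, hνf⟩
      rw [hfrob'] at hνf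
      by_cases hmin : IsMinimalGenerator Λ ν
      · exact Or.inl ⟨⟨hmin, by omega⟩, hνf⟩
      · have hdec : ∃ a ∈ Λ, ∃ b ∈ Λ, a ≠ 0 ∧ b ≠ 0 ∧ a + b = ν := by
          by_contra h
          exact hmin ⟨hνΛ'.1, hν0, h⟩
        obtain ⟨a, ha, b, hb, ha0, hb0, hab⟩ := hdec
        have hone : a = μ ∨ b = μ := by
          by_contra h
          push_neg at h
          exact hνmin ⟨a, ⟨ha, h.1⟩, b, ⟨hb, h.2⟩, ha0, hb0, hab⟩
        obtain ⟨c, hc, hc0, hcsum⟩ : ∃ c ∈ Λ, c ≠ 0 ∧ μ + c = ν := by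
          rcases hone with rfl | rfl
          · exact ⟨b, hb, hb0, hab⟩
          · exact ⟨a, ha, ha0, by omega⟩
        have hmc : m ≤ c := hmle c hc hc0
        rcases eq_or_lt_of_le hmc with rfl | hlt
        · refine Or.inr ⟨by omega, ?_⟩
          have : m + μ = ν := by omega
          rw [this]
          exact ⟨hνΛ', hν0, hνmin⟩
        · exfalso
          apply hνmin
          refine ⟨m, ⟨hmΛ, by simp only [Set.mem_singleton_iff]; omega⟩,
            ν - m, ⟨hmemgt _ (by omega), by simp only [Set.mem_singleton_iff]; omega⟩,
            hm0, by omega, by omega⟩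
    · rintro (⟨⟨⟨hνΛ, hν0, hνmin⟩, hνf⟩, hμν⟩ | ⟨rfl, hmin⟩)
      · refine ⟨⟨⟨hνΛ, by simp only [Set.mem_singleton_iff]; omega⟩, hν0, ?_⟩,
          by rw [hfrob']; omega⟩
        rintro ⟨a, ⟨ha, _⟩, b, ⟨hb, _⟩, ha0, hb0, hab⟩
        exact hνmin ⟨a, ha, b, hb, ha0, hb0, hab⟩
      · exact ⟨hmin, by rw [hfrob']; omega⟩
  constructor
  · intro hstrong
    ext ν
    simp only [Set.mem_setOf_eq, Set.mem_union, Set.mem_singleton_iff]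
    rw [key ν]
    constructor
    · rintro (h | ⟨h, _⟩)
      · exact Or.inl h
      · exact Or.inr h
    · rintro (h | rfl)
      · exact Or.inl h
      · exact Or.inr ⟨rfl, hstrong.2⟩
  · intro hweak
    ext ν
    simp only [Set.mem_setOf_eq]
    rw [key ν]
    constructor
    · rintro (h | ⟨_, h⟩)
      · exact h
      · exact absurd ⟨⟨⟨hμΛ, hμ0, hμmin⟩, hμf⟩, h⟩ hweak
    · exact Or.inl
end

section
/- Let Λ be a non-ordinary numerical semigroup and let λ < μ be two effective generators of Λ, with μ strong. Then μ is a strong generator of the numerical semigroup Λ \ {λ}. -/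
theorem stmt10 (Λ : Set ℕ) (hΛ : IsNumericalSemigroup Λ) (hord : ¬ IsOrdinary Λ)
    (lam μ : ℕ) (hlam : IsEffectiveGenerator Λ lam) (hμ : IsEffectiveGenerator Λ μ)
    (hlt : lam < μ) (hstrong : IsStrongGenerator Λ μ) :
    IsStrongGenerator (Λ \ {lam}) μ := by
  obtain ⟨h0, hadd, hfin⟩ := hΛ
  obtain ⟨⟨hlamΛ, hlam0, hlammin⟩, hlamF⟩ := hlam
  obtain ⟨⟨hμΛ, hμ0, hμmin⟩, hμF⟩ := hμ
  obtain ⟨_, hmμΛ', hmμ0, hmμmin⟩ := hstrong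
  have hbdd : BddAbove Λᶜ := hfin.bddAbove
  have hgt : ∀ n, sgFrobenius Λ < n → n ∈ Λ := by
    intro n hn
    by_contra h
    exact absurd (le_csSup hbdd h) (not_le.mpr hn)
  have hmmem : sgMultiplicity Λ ∈ Λ \ {0} := Nat.sInf_mem ⟨lam, hlamΛ, hlam0⟩
  have hmF : sgMultiplicity Λ ≤ sgFrobenius Λ := by
    by_contra h
    push_neg at h
    apply hord
    refine ⟨sgMultiplicity Λ, Set.ext fun x => ?_⟩
    constructor
    · intro hx
      rcases eq_or_ne x 0 with rfl | hx0
      · exact Or.inl rfl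
      · exact Or.inr (Nat.sInf_le ⟨hx, hx0⟩)
    · rintro (hx | hx)
      · exact hx ▸ h0
      · exact hgt x (lt_of_lt_of_le h hx)
  have hmlam : sgMultiplicity Λ ≠ lam := ne_of_lt (lt_of_le_of_lt hmF hlamF)
  have hcompl : (Λ \ {lam})ᶜ = Λᶜ ∪ {lam} := by
    ext x
    simp only [Set.mem_compl_iff, Set.mem_diff, Set.mem_union, Set.mem_singleton_iff]
    tauto
  have hFrob' : sgFrobenius (Λ \ {lam}) = lam := by
    show sSup (Λ \ {lam})ᶜ = lam
    rw [hcompl]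
    apply le_antisymm
    · apply csSup_le ⟨lam, Or.inr rfl⟩
      rintro x (hx | hx)
      · exact le_trans (le_csSup hbdd hx) hlamF.le
      · exact le_of_eq hx
    · exact le_csSup ((hfin.union (Set.finite_singleton _)).bddAbove) (Or.inr rfl)
  have hm' : sgMultiplicity Λ ∈ (Λ \ {lam}) \ {0} := ⟨⟨hmmem.1, hmlam⟩, hmmem.2⟩
  have hMult' : sgMultiplicity (Λ \ {lam}) = sgMultiplicity Λ := by
    apply le_antisymm (Nat.sInf_le hm')
    have hmem := Nat.sInf_mem (⟨sgMultiplicity Λ, hm'⟩ : ((Λ \ {lam}) \ {0}).Nonempty)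
    exact Nat.sInf_le ⟨hmem.1.1, hmem.2⟩
  have hμlam : μ ≠ lam := hlt.ne'
  refine ⟨⟨⟨⟨hμΛ, hμlam⟩, hμ0, ?_⟩, ?_⟩, ?_⟩
  · rintro ⟨a, ⟨haΛ, -⟩, b, ⟨hbΛ, -⟩, ha0, hb0, hab⟩
    exact hμmin ⟨a, haΛ, b, hbΛ, ha0, hb0, hab⟩
  · rw [hFrob']; exact hlt
  · rw [hMult']
    have hne : sgMultiplicity Λ + μ ≠ lam := by
      have : lam < sgMultiplicity Λ + μ :=
        lt_trans hlt (Nat.lt_add_of_pos_left (Nat.pos_of_ne_zero hmmem.2))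
      exact this.ne'
    refine ⟨⟨⟨hmμΛ'.1, hne⟩, hmμΛ'.2⟩, hmμ0, ?_⟩
    rintro ⟨a, ⟨⟨haΛ, -⟩, haμ⟩, b, ⟨⟨hbΛ, -⟩, hbμ⟩, ha0, hb0, hab⟩
    exact hmμmin ⟨a, ⟨haΛ, haμ⟩, b, ⟨hbΛ, hbμ⟩, ha0, hb0, hab⟩
end

section
/- For 2 ≤ k ≤ ⌈g/2⌉, the strong generators of the numerical semigroup P_{g,k+1} = ⟨g+1 | g+k+1, ..., 2g+2-hat, ..., 2g+k+1⟩ are exactly {g+k+1, g+k+2, ..., g+2k}; in particular P_{g,k+1} has exactly k strong generators. -/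
def dCoef (g i : ℕ) : ℕ := (2*g+i) / (g+1)

def Pgi (g i : ℕ) : Set ℕ :=
  {n : ℕ | (g+1) ∣ n} ∪
  {n : ℕ | g+i ≤ n ∧ n ≤ 2*g+i ∧ n ≠ (dCoef g i) * (g+1)} ∪
  {n : ℕ | 2*g+i+1 ≤ n}

lemma mem_Pgi (g k : ℕ) (hg : 1 ≤ g) (hk2 : 2 ≤ k) (hk : 2*k ≤ g+1) (n : ℕ) :
    n ∈ Pgi g (k+1) ↔ n = 0 ∨ n = g+1 ∨ g+k+1 ≤ n := by
  simp only [Pgi, Set.mem_union, Set.mem_setOf_eq]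
  constructor
  · rintro ((⟨m, rfl⟩ | h) | h)
    · rcases m with _ | _ | m
      · omega
      · omega
      · have : (g+1) * (m+1+1) = (g+1)*m + 2*g + 2 := by ring
        omega
    · omega
    · omega
  · intro h
    rcases h with rfl | rfl | h
    · exact Or.inl (Or.inl ⟨0, by ring⟩)
    · exact Or.inl (Or.inl ⟨1, by ring⟩)
    · by_cases hd : (g+1) ∣ n
      · exact Or.inl (Or.inl hd)
      · by_cases h2 : n ≤ 2*g+(k+1)
        · refine Or.inl (Or.inr ⟨by omega, by omega, ?_⟩)
          intro he
          exact hd ⟨dCoef g (k+1), by rw [he]; ring⟩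
        · exact Or.inr (by omega)

lemma frob_Pgi (g k : ℕ) (hg : 1 ≤ g) (hk2 : 2 ≤ k) (hk : 2*k ≤ g+1) :
    sgFrobenius (Pgi g (k+1)) = g+k := by
  unfold sgFrobenius
  have hmem : g+k ∈ (Pgi g (k+1))ᶜ := by
    simp only [Set.mem_compl_iff, mem_Pgi g k hg hk2 hk]
    omega
  have hub : ∀ n ∈ (Pgi g (k+1))ᶜ, n ≤ g+k := by
    intro n hn
    by_contra h
    exact hn ((mem_Pgi g k hg hk2 hk n).2 (by omega))
  exact le_antisymm (csSup_le ⟨_, hmem⟩ hub) (le_csSup ⟨g+k, hub⟩ hmem)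

lemma mult_Pgi (g k : ℕ) (hg : 1 ≤ g) (hk2 : 2 ≤ k) (hk : 2*k ≤ g+1) :
    sgMultiplicity (Pgi g (k+1)) = g+1 := by
  unfold sgMultiplicity
  have h1 : g+1 ∈ Pgi g (k+1) \ {0} := by
    constructor
    · exact (mem_Pgi g k hg hk2 hk _).2 (Or.inr (Or.inl rfl))
    · simp
  have hle := Nat.sInf_le h1
  have hmem := Nat.sInf_mem (⟨g+1, h1⟩ : (Pgi g (k+1) \ {0}).Nonempty)
  obtain ⟨hm, hz⟩ := hmem
  simp only [Set.mem_singleton_iff] at hz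
  rcases (mem_Pgi g k hg hk2 hk _).1 hm with h | h | h <;> omega

theorem stmt12 (g k : ℕ) (hg : 1 ≤ g) (hk2 : 2 ≤ k) (hk : k ≤ (g + 1) / 2) :
    {μ : ℕ | IsStrongGenerator (Pgi g (k+1)) μ} = Set.Icc (g+k+1) (g+2*k) ∧
    {μ : ℕ | IsStrongGenerator (Pgi g (k+1)) μ}.ncard = k := by
  have hk' : 2*k ≤ g+1 := by omega
  have hP := mem_Pgi g k hg hk2 hk'
  have hF := frob_Pgi g k hg hk2 hk'
  have hM := mult_Pgi g k hg hk2 hk'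
  have hset : {μ : ℕ | IsStrongGenerator (Pgi g (k+1)) μ} = Set.Icc (g+k+1) (g+2*k) := by
    ext μ
    simp only [Set.mem_setOf_eq, Set.mem_Icc, IsStrongGenerator, IsEffectiveGenerator,
      IsMinimalGenerator, hF, hM, Set.mem_diff, Set.mem_singleton_iff]
    constructor
    · rintro ⟨⟨⟨hμ, hμ0, _⟩, hfrob⟩, _, _, hns⟩
      have hlo : g+k+1 ≤ μ := by
        rcases (hP μ).1 hμ with h | h | h <;> omega
      refine ⟨hlo, ?_⟩
      by_contra hcon
      push_neg at hcon
      exact hns ⟨g+k+1, ⟨(hP _).2 (by omega), by omega⟩,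
        μ - k, ⟨(hP _).2 (by omega), by omega⟩, by omega, by omega, by omega⟩
    · rintro ⟨hlo, hhi⟩
      refine ⟨⟨⟨(hP μ).2 (by omega), by omega, ?_⟩, by omega⟩,
        ⟨(hP _).2 (by omega), by omega⟩, by omega, ?_⟩
      · rintro ⟨a, ha, b, hb, ha0, hb0, hab⟩
        rcases (hP a).1 ha with h1 | h1 | h1 <;>
          rcases (hP b).1 hb with h2 | h2 | h2 <;> omega
      · rintro ⟨a, ⟨ha, haμ⟩, b, ⟨hb, hbμ⟩, ha0, hb0, hab⟩
        rcases (hP a).1 ha with h1 | h1 | h1 <;>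
          rcases (hP b).1 hb with h2 | h2 | h2 <;> omega
  refine ⟨hset, ?_⟩
  rw [hset, show Set.Icc (g+k+1) (g+2*k) = ↑(Finset.Icc (g+k+1) (g+2*k)) by simp,
    Set.ncard_coe_finset, Nat.card_Icc]
  omega
end

section
/- For k > g, all effective generators of P_{g,k+1} are strong; consequently P_{g,k+1} has exactly g strong generators. -/
/-! `Pgi g (k + 1)` is `⟨m⟩ ∪ [c, ∞)` with `m = g + 1` and `c = g + k + 1`, and `k > g` means
`c ≥ 2m`. Its effective generators are the non-multiples of `m` in `[c, c + m)`, which are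
`m - 1 = g` in number. Such a `μ` is strong: in `m + μ = a + b` with `a, b ≠ μ`, two summands
`≥ c` add to at least `2c > m + μ`, two multiples of `m` would make `μ` one, and a multiple
`a ≠ m` is at least `2m`, leaving `b < c`. -/

open Finset

def multiplesWithTail (m c : ℕ) : Set ℕ := {n | m ∣ n ∨ c ≤ n}

theorem Pgi_eq_multiplesWithTail (g i : ℕ) : Pgi g i = multiplesWithTail (g + 1) (g + i) := by
  ext n
  simp only [Pgi, multiplesWithTail, Set.mem_union, Set.mem_ofPred_eq]
  constructor
  · rintro ((h | ⟨h, -, -⟩) | h)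
    exacts [Or.inl h, Or.inr h, Or.inr (by omega)]
  · rintro (h | h)
    · exact Or.inl (Or.inl h)
    · by_cases hd : n = dCoef g i * (g + 1)
      · exact Or.inl (Or.inl (hd ▸ dvd_mul_left _ _))
      · by_cases h' : n ≤ 2 * g + i
        exacts [Or.inl (Or.inr ⟨h, h', hd⟩), Or.inr (by omega)]

theorem Nat.two_mul_le_of_dvd_of_ne {m a : ℕ} (ha : m ∣ a) (h0 : a ≠ 0) (hne : a ≠ m) :
    2 * m ≤ a := by
  obtain ⟨j, rfl⟩ := ha
  have hj : 2 ≤ j := by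
    rcases j with _ | _ | j <;> simp_all
  calc 2 * m = m * 2 := Nat.mul_comm _ _
    _ ≤ m * j := Nat.mul_le_mul_left m hj

theorem Nat.filter_dvd_Ico_add_self {m : ℕ} (hm : 0 < m) (c : ℕ) :
    {x ∈ Ico c (c + m) | m ∣ x} = {(c + m - 1) / m * m} := by
  have hle : (c + m - 1) / m * m ≤ c + m - 1 := Nat.div_mul_le_self _ _
  have hlt : c + m - 1 < (c + m - 1) / m * m + m := Nat.lt_div_mul_add hm
  ext x
  simp only [Finset.mem_filter, Finset.mem_Ico, Finset.mem_singleton]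
  constructor
  · rintro ⟨⟨hcx, hxc⟩, j, rfl⟩
    have hj : (c + m - 1) / m = j :=
      Nat.div_eq_of_lt_le (by rw [Nat.mul_comm]; omega) (by rw [Nat.succ_mul, Nat.mul_comm]; omega)
    rw [hj, Nat.mul_comm]
  · rintro rfl
    exact ⟨⟨by omega, by omega⟩, dvd_mul_left _ _⟩

theorem Nat.card_filter_not_dvd_Ico_add_self {m : ℕ} (hm : 0 < m) (c : ℕ) :
    #{x ∈ Ico c (c + m) | ¬ m ∣ x} = m - 1 := by
  have := card_filter_add_card_filter_not (s := Ico c (c + m)) (m ∣ ·)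
  rw [Nat.filter_dvd_Ico_add_self hm, card_singleton, Nat.card_Ico] at this
  omega

namespace multiplesWithTail

variable {m c : ℕ}

theorem mem_iff {n : ℕ} : n ∈ multiplesWithTail m c ↔ m ∣ n ∨ c ≤ n := Iff.rfl

theorem le_of_mem (hmc : m ≤ c) {n : ℕ} (hn : n ∈ multiplesWithTail m c) (h0 : n ≠ 0) :
    m ≤ n := by
  rcases hn with h | h
  exacts [Nat.le_of_dvd (Nat.pos_of_ne_zero h0) h, hmc.trans h]

theorem sgMultiplicity_eq (hm : 0 < m) (hmc : m ≤ c) :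
    sgMultiplicity (multiplesWithTail m c) = m := by
  have hmem : m ∈ multiplesWithTail m c \ {0} := ⟨Or.inl dvd_rfl, hm.ne'⟩
  exact le_antisymm (Nat.sInf_le hmem)
    (le_csInf ⟨m, hmem⟩ fun n ⟨hn, hn0⟩ => le_of_mem hmc hn hn0)

theorem sgFrobenius_lt (hc : 0 < c) : sgFrobenius (multiplesWithTail m c) < c := by
  have : sgFrobenius (multiplesWithTail m c) ≤ c - 1 :=
    csSup_le' fun n hn => by simp only [Set.mem_compl_iff, mem_iff, not_or] at hn; omega
  omega

theorem le_sgFrobenius (hm : 2 ≤ m) (hc : 2 * m ≤ c) : m ≤ sgFrobenius (multiplesWithTail m c) := by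
  have hbdd : BddAbove (multiplesWithTail m c)ᶜ :=
    ⟨c, fun n hn => by simp only [Set.mem_compl_iff, mem_iff, not_or] at hn; omega⟩
  -- `c - 1` and `c - 2` cannot both be multiples of `m ≥ 2`, so one of them is a gap.
  have hgap : c - 2 ∉ multiplesWithTail m c ∨ c - 1 ∉ multiplesWithTail m c := by
    by_cases h1 : m ∣ c - 1
    · refine Or.inl fun h2 => ?_
      have h2 : m ∣ c - 2 := h2.resolve_right (by omega)
      have : m ∣ 1 := (Nat.dvd_add_right h2).mp (by rwa [show c - 2 + 1 = c - 1 by omega])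
      have := Nat.le_of_dvd one_pos this
      omega
    · exact Or.inr fun h => h1 (h.resolve_right (by omega))
  rcases hgap with h | h <;> have := le_csSup hbdd h <;> unfold sgFrobenius <;> omega

theorem not_isMinimalGenerator_add (hm : m ≠ 0) {n : ℕ} (hn : n ∈ multiplesWithTail m c)
    (hn0 : n ≠ 0) : ¬ IsMinimalGenerator (multiplesWithTail m c) (m + n) :=
  fun ⟨_, _, hmin⟩ => hmin ⟨m, Or.inl dvd_rfl, n, hn, hm, hn0, rfl⟩

theorem isEffectiveGenerator_iff (hm : 2 ≤ m) (hc : 2 * m ≤ c) {μ : ℕ} :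
    IsEffectiveGenerator (multiplesWithTail m c) μ ↔ μ ∈ Ico c (c + m) ∧ ¬ m ∣ μ := by
  rw [Finset.mem_Ico]
  constructor
  · rintro ⟨hgen, hF⟩
    have hmF := le_sgFrobenius hm hc
    have hsub := Nat.sub_add_cancel (hmF.trans hF.le)
    by_cases hdvd : m ∣ μ
    · exfalso
      have h2m := Nat.two_mul_le_of_dvd_of_ne hdvd hgen.2.1 (by omega)
      exact not_isMinimalGenerator_add (m := m) (c := c) (n := μ - m) (by omega)
        (Or.inl (Nat.dvd_sub hdvd dvd_rfl)) (by omega) (by rwa [Nat.add_comm, hsub])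
    · have hcμ : c ≤ μ := hgen.1.resolve_left hdvd
      refine ⟨⟨hcμ, ?_⟩, hdvd⟩
      by_contra! h
      exact not_isMinimalGenerator_add (m := m) (c := c) (n := μ - m) (by omega)
        (Or.inr (by omega)) (by omega) (by rwa [Nat.add_comm, hsub])
  · rintro ⟨⟨hcμ, hμc⟩, hdvd⟩
    refine ⟨⟨Or.inr hcμ, by omega, ?_⟩, (sgFrobenius_lt (by omega)).trans_le hcμ⟩
    rintro ⟨a, ha, b, hb, ha0, hb0, rfl⟩
    rcases ha with ha | ha <;> rcases hb with hb | hb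
    · exact hdvd (Nat.dvd_add ha hb)
    · have := Nat.le_of_dvd (Nat.pos_of_ne_zero ha0) ha; omega
    · have := Nat.le_of_dvd (Nat.pos_of_ne_zero hb0) hb; omega
    · omega

theorem isMinimalGenerator_diff_add (hm : 0 < m) (hc : 2 * m ≤ c) {μ : ℕ} (hcμ : c ≤ μ)
    (hμc : μ < c + m) (hdvd : ¬ m ∣ μ) :
    IsMinimalGenerator (multiplesWithTail m c \ {μ}) (m + μ) := by
  refine ⟨⟨Or.inr (by omega), by simp [hm.ne']⟩, by omega, ?_⟩
  rintro ⟨a, ⟨ha, haμ⟩, b, ⟨hb, hbμ⟩, ha0, hb0, hab⟩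
  simp only [Set.mem_singleton_iff] at haμ hbμ
  rcases ha with ha | ha <;> rcases hb with hb | hb
  · exact hdvd ((Nat.dvd_add_right dvd_rfl).mp (hab ▸ Nat.dvd_add ha hb))
  · have := Nat.two_mul_le_of_dvd_of_ne ha ha0 (by omega); omega
  · have := Nat.two_mul_le_of_dvd_of_ne hb hb0 (by omega); omega
  · omega

theorem isStrongGenerator_of_isEffectiveGenerator (hm : 2 ≤ m) (hc : 2 * m ≤ c) {μ : ℕ}
    (hμ : IsEffectiveGenerator (multiplesWithTail m c) μ) :
    IsStrongGenerator (multiplesWithTail m c) μ := by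
  obtain ⟨hμc, hdvd⟩ := (isEffectiveGenerator_iff hm hc).mp hμ
  rw [Finset.mem_Ico] at hμc
  refine ⟨hμ, ?_⟩
  rw [sgMultiplicity_eq (by omega) (by omega)]
  exact isMinimalGenerator_diff_add (by omega) hc hμc.1 hμc.2 hdvd

theorem setOf_isStrongGenerator (hm : 2 ≤ m) (hc : 2 * m ≤ c) :
    {μ | IsStrongGenerator (multiplesWithTail m c) μ} = ↑{x ∈ Ico c (c + m) | ¬ m ∣ x} := by
  ext μ
  rw [Set.mem_ofPred_eq, coe_filter, Set.mem_ofPred_eq, ← isEffectiveGenerator_iff hm hc]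
  exact ⟨And.left, isStrongGenerator_of_isEffectiveGenerator hm hc⟩

theorem ncard_setOf_isStrongGenerator (hm : 2 ≤ m) (hc : 2 * m ≤ c) :
    {μ | IsStrongGenerator (multiplesWithTail m c) μ}.ncard = m - 1 := by
  rw [setOf_isStrongGenerator hm hc, Set.ncard_coe_finset,
    Nat.card_filter_not_dvd_Ico_add_self (by omega)]

end multiplesWithTail

theorem stmt13 (g k : ℕ) (hg : 1 ≤ g) (hk : g < k) :
    (∀ μ : ℕ, IsEffectiveGenerator (Pgi g (k+1)) μ → IsStrongGenerator (Pgi g (k+1)) μ) ∧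
    {μ : ℕ | IsStrongGenerator (Pgi g (k+1)) μ}.ncard = g := by
  have hm : 2 ≤ g + 1 := by omega
  have hc : 2 * (g + 1) ≤ g + (k + 1) := by omega
  rw [Pgi_eq_multiplesWithTail]
  exact ⟨fun _ => multiplesWithTail.isStrongGenerator_of_isEffectiveGenerator hm hc,
    multiplesWithTail.ncard_setOf_isStrongGenerator hm hc⟩
end

section
/- Let ℓ_g denote the number of nodes at level g of the generating tree A' with root labeled ō(2) and succession rules ō(e) → (0)(1)...(e−3) w̃(e−1) ō(e+1); w̃(e) → (0)(1)...(e−2) w̃(e); (e) → (0)(1)...(e−1), where the root is at level 1 and children of a level-g node are at level g+1. Then ℓ_g = F_{g+2} − 1 for all g ≥ 1, where F is the Fibonacci sequence with F₀ = 0, F₁ = 1. -/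
/-- number of nodes labeled `ō(e)` at level `g+1` of the tree `A'` -/
def Abar : ℕ → ℕ → ℕ
  | 0, e => if e = 2 then 1 else 0
  | g+1, e => if 3 ≤ e then Abar g (e-1) else 0

/-- number of nodes labeled `w̃(e)` at level `g+1` of the tree `A'` -/
def Atil : ℕ → ℕ → ℕ
  | 0, _ => 0
  | g+1, e => Abar g (e+1) + Atil g e

/-- number of nodes with plain label `(e)` at level `g+1` of the tree `A'` -/
def Apl : ℕ → ℕ → ℕ
  | 0, _ => 0
  | g+1, e =>
      (∑ e' ∈ Finset.range (g+4), if e+3 ≤ e' then Abar g e' else 0)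
    + (∑ e' ∈ Finset.range (g+4), if e+2 ≤ e' then Atil g e' else 0)
    + (∑ e' ∈ Finset.range (g+4), if e+1 ≤ e' then Apl g e' else 0)

/-- total number of nodes at level `g` of the tree `A'` (root at level 1) -/
def levelCount (g : ℕ) : ℕ :=
  ∑ e ∈ Finset.range (g+3), (Abar (g-1) e + Atil (g-1) e + Apl (g-1) e)

lemma fib_ge (t : ℕ) : t + 1 ≤ Nat.fib (t + 2) := by
  induction t with
  | zero => decide
  | succ t ih =>
    have h0 : t + 1 + 2 = t + 3 := rfl
    rw [h0]
    have h1 : Nat.fib (t+3) = Nat.fib (t+1) + Nat.fib (t+2) := Nat.fib_add_two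
    have h2 : 1 ≤ Nat.fib (t+1) := Nat.fib_pos.mpr t.succ_pos
    omega

lemma abar_eq (g : ℕ) : ∀ e, Abar g e = if e = g + 2 then 1 else 0 := by
  induction g with
  | zero => intro e; rfl
  | succ g ih =>
    intro e
    rw [Abar]
    rcases le_or_gt 3 e with h | h
    · rw [if_pos h, ih]; split_ifs <;> omega
    · rw [if_neg (by omega), if_neg (by omega)]

lemma atil_eq (g : ℕ) : ∀ e, Atil g e = if 1 ≤ e ∧ e ≤ g then 1 else 0 := by
  induction g with
  | zero => intro e; rw [Atil]; split_ifs <;> omega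
  | succ g ih =>
    intro e
    rw [Atil, abar_eq, ih]
    split_ifs <;> omega

lemma sum_abar (g a n : ℕ) (hn : g + 3 ≤ n) :
    (∑ e' ∈ Finset.range n, if a ≤ e' then Abar g e' else 0)
      = if a ≤ g + 2 then 1 else 0 := by
  rw [Finset.sum_eq_single (g+2)]
  · rw [abar_eq]; simp
  · intro b _ hb; rw [abar_eq, if_neg hb]; simp
  · intro h; exact absurd (Finset.mem_range.mpr (by omega)) h

lemma sum_atil (g a n : ℕ) (hn : g + 1 ≤ n) :
    (∑ e' ∈ Finset.range n, if a ≤ e' then Atil g e' else 0)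
      = g + 1 - max a 1 := by
  have h : ∀ e' ∈ Finset.range n,
      (if a ≤ e' then Atil g e' else 0) = if max a 1 ≤ e' ∧ e' ≤ g then 1 else 0 := by
    intro e' _; rw [atil_eq]; split_ifs <;> omega
  rw [Finset.sum_congr rfl h, ← Finset.card_filter]
  have h2 : (Finset.range n).filter (fun e' => max a 1 ≤ e' ∧ e' ≤ g)
      = Finset.Ico (max a 1) (g+1) := by
    ext x; simp only [Finset.mem_filter, Finset.mem_range, Finset.mem_Ico]; omega
  rw [h2, Nat.card_Ico]

lemma sum_fib (t : ℕ) :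
    (∑ k ∈ Finset.range t, (Nat.fib (k + 2) - 1)) = Nat.fib (t + 3) - (t + 2) := by
  induction t with
  | zero => decide
  | succ t ih =>
    rw [Finset.sum_range_succ, ih]
    have h0 : t + 1 + 3 = t + 4 := rfl
    rw [h0]
    have h1 : Nat.fib (t+4) = Nat.fib (t+2) + Nat.fib (t+3) := Nat.fib_add_two
    have h2 := fib_ge t
    have h3 := fib_ge (t+1)
    rw [show t+1+2 = t+3 from rfl] at h3
    omega

lemma sum_apl_aux (g a n : ℕ) (hn : g ≤ n) :
    (∑ e' ∈ Finset.range n, if a ≤ e' then Nat.fib (g - e' + 1) - 1 else 0)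
      = Nat.fib (g - a + 3) - (g - a + 2) := by
  have h1 : (∑ e' ∈ Finset.range g, if a ≤ e' then Nat.fib (g - e' + 1) - 1 else 0)
      = ∑ e' ∈ Finset.range n, if a ≤ e' then Nat.fib (g - e' + 1) - 1 else 0 := by
    apply Finset.sum_subset (Finset.range_subset_range.mpr hn)
    intro x hx hxg
    simp only [Finset.mem_range, not_lt] at hxg
    have : g - x = 0 := by omega
    rw [this]; simp
  rw [← h1, ← Finset.sum_range_reflect]
  have h2 : ∀ j ∈ Finset.range g,
      (if a ≤ g - 1 - j then Nat.fib (g - (g - 1 - j) + 1) - 1 else 0)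
        = if j < g - a then Nat.fib (j + 2) - 1 else 0 := by
    intro j hj
    simp only [Finset.mem_range] at hj
    rcases le_or_gt a (g - 1 - j) with h | h
    · rw [if_pos h, if_pos (by omega)]
      congr 2
      omega
    · rw [if_neg (by omega), if_neg (by omega)]
  rw [Finset.sum_congr rfl h2]
  have h3 : (∑ j ∈ Finset.range (g - a), if j < g - a then Nat.fib (j + 2) - 1 else 0)
      = ∑ j ∈ Finset.range g, if j < g - a then Nat.fib (j + 2) - 1 else 0 := by
    apply Finset.sum_subset (Finset.range_subset_range.mpr (by omega))
    intro x hx hxg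
    simp only [Finset.mem_range, not_lt] at hxg
    rw [if_neg (by omega)]
  rw [← h3, Finset.sum_congr rfl (fun j hj => by
    rw [if_pos (Finset.mem_range.mp hj)]), sum_fib]

lemma apl_eq (g : ℕ) : ∀ e, Apl g e = Nat.fib (g - e + 1) - 1 := by
  induction g with
  | zero => intro e; rw [Apl]; simp [Nat.zero_sub]
  | succ g ih =>
    intro e
    rw [Apl, sum_abar g (e+3) (g+4) (by omega), sum_atil g (e+2) (g+4) (by omega),
      Finset.sum_congr rfl (fun e' _ => by rw [ih e']),
      sum_apl_aux g (e+1) (g+4) (by omega)]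
    have hm : max (e+2) 1 = e + 2 := by omega
    rw [hm]
    rcases lt_or_ge e g with h | h
    · rw [if_pos (by omega)]
      have h2 : g + 1 - e + 1 = (g - (e+1)) + 3 := by omega
      rw [h2]
      have h4 := fib_ge ((g - (e+1)) + 1)
      rw [show (g - (e+1)) + 1 + 2 = (g - (e+1)) + 3 from rfl] at h4
      omega
    · have hd : g - (e+1) = 0 := by omega
      rw [hd, if_neg (by omega)]
      have hz : g + 1 - (e + 2) = 0 := by omega
      rw [hz]
      have harg : g + 1 - e + 1 = 2 ∨ g + 1 - e + 1 = 1 := by omega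
      rcases harg with h5 | h5 <;> rw [h5] <;> decide

theorem stmt15 (g : ℕ) (hg : 1 ≤ g) : levelCount g = Nat.fib (g + 2) - 1 := by
  obtain ⟨h, rfl⟩ : ∃ h, g = h + 1 := ⟨g - 1, by omega⟩
  rw [levelCount]
  simp only [Nat.add_sub_cancel]
  rw [Finset.sum_add_distrib, Finset.sum_add_distrib]
  have e1 : (∑ e ∈ Finset.range (h+1+3), Abar h e) = if (0:ℕ) ≤ h + 2 then 1 else 0 := by
    rw [← sum_abar h 0 (h+1+3) (by omega)]
    exact Finset.sum_congr rfl (fun e _ => by simp)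
  have e2 : (∑ e ∈ Finset.range (h+1+3), Atil h e) = h + 1 - max 0 1 := by
    rw [← sum_atil h 0 (h+1+3) (by omega)]
    exact Finset.sum_congr rfl (fun e _ => by simp)
  have e3 : (∑ e ∈ Finset.range (h+1+3), Apl h e)
      = Nat.fib (h - 0 + 3) - (h - 0 + 2) := by
    rw [← sum_apl_aux h 0 (h+1+3) (by omega)]
    exact Finset.sum_congr rfl (fun e _ => by simp [apl_eq])
  rw [e1, e2, e3]
  simp only [Nat.sub_zero, if_pos (Nat.zero_le (h+2)), Nat.max_eq_right (Nat.zero_le 1)]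
  have h4 := fib_ge (h+1)
  rw [show h+1+2 = h+3 from rfl] at h4 ⊢
  omega
end

section
/- Let Λ be a numerical semigroup with multiplicity λ₁ and e effective generators. If λ₁ > 2e, then Λ has only finitely many descendants in the semigroup tree; i.e., Λ does not belong to any infinite chain. -/
/-
Write `F`, `m` and `e` for the Frobenius number, the multiplicity and the number of effective
generators of `Λ`. Every descendant of `Λ` arises by removing from `Λ` only elements `x` with
`F < x ≤ 2F + m` that are congruent modulo `m` to an effective generator of `Λ`, and there are
finitely many such sets. Passing to a child removes an effective generator `x` of a descendant
`Λ'`. If `x - m ∈ Λ`, it was removed earlier, so `x` lies in an admissible residue class;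
otherwise `x ≤ F + m` is an effective generator of `Λ` itself. Since `2e < m`, some class `u`
has neither `u` nor `x - u` admissible; the representative `c ∈ (F, F + m]` of `u` and, if
`x > 2F + m`, also `x - c > F` then lie in `Λ'`, contradicting the minimality of `x`.
-/

theorem exists_notMem_and_sub_notMem {G : Type*} [AddCommGroup G] [Finite G] (S : Set G)
    (hS : 2 * S.ncard < Nat.card G) (t : G) : ∃ u, u ∉ S ∧ t - u ∉ S := by
  by_contra! h
  have hcover : (Set.univ : Set G) = S ∪ (t - ·) '' S := by
    refine (Set.eq_univ_of_forall fun u => ?_).symm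
    by_cases hu : u ∈ S
    · exact Or.inl hu
    · exact Or.inr ⟨t - u, h u hu, sub_sub_cancel t u⟩
  have := calc
    Nat.card G = (S ∪ (t - ·) '' S).ncard := by rw [← hcover, Set.ncard_univ]
    _ ≤ S.ncard + ((t - ·) '' S).ncard := Set.ncard_union_le _ _
    _ ≤ S.ncard + S.ncard := Nat.add_le_add_left (Set.ncard_image_le S.toFinite) _
  omega

theorem Set.finite_setOf_subset_diff_subset {α : Type*} {Λ I : Set α} (hI : I.Finite) :
    {Λ' | Λ' ⊆ Λ ∧ Λ \ Λ' ⊆ I}.Finite := by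
  refine (hI.finite_subsets.image (Λ \ ·)).subset ?_
  rintro Λ' ⟨hsub, hdiff⟩
  exact ⟨Λ \ Λ', hdiff, Set.sdiff_sdiff_cancel_left hsub⟩

section NumericalSemigroup

variable {Λ : Set ℕ}

theorem mem_of_sgFrobenius_lt (hfin : Λᶜ.Finite) {n : ℕ} (hn : sgFrobenius Λ < n) : n ∈ Λ := by
  by_contra h
  exact (le_csSup hfin.bddAbove h).not_gt hn

theorem sgFrobenius_notMem_of_ne_zero (hfin : Λᶜ.Finite) (h : sgFrobenius Λ ≠ 0) :
    sgFrobenius Λ ∉ Λ := by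
  refine Nat.sSup_mem (Set.nonempty_iff_ne_empty.2 fun hempty => h ?_) hfin.bddAbove
  rw [sgFrobenius, hempty, csSup_empty, bot_eq_zero]

theorem sgFrobenius_le_sgFrobenius {Λ' : Set ℕ} (hfin : Λ'ᶜ.Finite) (hsub : Λ' ⊆ Λ) :
    sgFrobenius Λ ≤ sgFrobenius Λ' :=
  csSup_le_csSup' hfin.bddAbove (Set.compl_subset_compl.2 hsub)

theorem sgMultiplicity_mem (hfin : Λᶜ.Finite) : sgMultiplicity Λ ∈ Λ \ {0} :=
  Nat.sInf_mem ⟨sgFrobenius Λ + 1, mem_of_sgFrobenius_lt hfin (Nat.lt_succ_self _), by simp⟩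

theorem sgMultiplicity_le {a : ℕ} (ha : a ∈ Λ) (ha0 : a ≠ 0) : sgMultiplicity Λ ≤ a :=
  Nat.sInf_le ⟨ha, ha0⟩

theorem IsEffectiveGenerator.le_sgFrobenius_add_sgMultiplicity (hfin : Λᶜ.Finite) {μ : ℕ}
    (hμ : IsEffectiveGenerator Λ μ) : μ ≤ sgFrobenius Λ + sgMultiplicity Λ := by
  obtain ⟨⟨-, -, hmin⟩, hF⟩ := hμ
  obtain ⟨hm, hm0⟩ := sgMultiplicity_mem hfin
  by_contra! h
  exact hmin ⟨_, hm, μ - sgMultiplicity Λ, mem_of_sgFrobenius_lt hfin (by omega), hm0, by omega,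
    by omega⟩

theorem finite_setOf_isEffectiveGenerator (hfin : Λᶜ.Finite) :
    {μ | IsEffectiveGenerator Λ μ}.Finite :=
  (Set.finite_Iic _).subset fun _ hμ => hμ.le_sgFrobenius_add_sgMultiplicity hfin

theorem sgMultiplicity_lt_sgFrobenius (hfin : Λᶜ.Finite)
    (he : 2 * {μ | IsEffectiveGenerator Λ μ}.ncard < sgMultiplicity Λ) :
    sgMultiplicity Λ < sgFrobenius Λ := by
  obtain ⟨hm, hm0⟩ := sgMultiplicity_mem hfin
  have hmF : sgMultiplicity Λ ≠ sgFrobenius Λ := fun h =>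
    sgFrobenius_notMem_of_ne_zero hfin (h ▸ hm0) (h ▸ hm)
  by_contra! hFm
  have hIcc : Set.Icc (sgMultiplicity Λ) (2 * sgMultiplicity Λ - 1) ⊆
      {μ | IsEffectiveGenerator Λ μ} := by
    rintro j ⟨hj1, hj2⟩
    refine ⟨⟨mem_of_sgFrobenius_lt hfin (by omega), by omega, ?_⟩, by omega⟩
    rintro ⟨a, ha, b, hb, ha0, hb0, rfl⟩
    have := sgMultiplicity_le ha ha0
    have := sgMultiplicity_le hb hb0
    omega
  have := Set.ncard_le_ncard hIcc (finite_setOf_isEffectiveGenerator hfin)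
  rw [Set.ncard_eq_toFinset_card' (Set.Icc _ _), Set.toFinset_Icc, Nat.card_Icc] at this
  omega

theorem IsChildOf.isEffectiveGenerator {Λ' : Set ℕ} (hchild : IsChildOf Λ' Λ)
    (hfin : Λᶜ.Finite) : IsEffectiveGenerator Λ (sgFrobenius Λ') := by
  obtain ⟨⟨h0', hadd', hfin'⟩, hss, hunion⟩ := hchild
  set x := sgFrobenius Λ'
  have hx : x ∈ Λ := hunion ▸ Or.inr rfl
  have hx' : x ∉ Λ' := fun h => hss.2 (hunion ▸ Set.union_subset subset_rfl
    (Set.singleton_subset_iff.2 h))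
  have hx0 : x ≠ 0 := fun h => hx' (h ▸ h0')
  have hmem' : ∀ a ∈ Λ, a ≠ x → a ∈ Λ' := fun a ha hax => by
    rw [← hunion] at ha
    exact ha.resolve_right hax
  refine ⟨⟨hx, hx0, ?_⟩, ?_⟩
  · rintro ⟨a, ha, b, hb, ha0, hb0, hab⟩
    exact hx' (hab ▸ hadd' a (hmem' a ha (by omega)) b (hmem' b hb (by omega)))
  · refine (sgFrobenius_le_sgFrobenius hfin' hss.1).lt_of_ne fun h => ?_
    exact sgFrobenius_notMem_of_ne_zero hfin (h ▸ hx0) (h ▸ hx)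

end NumericalSemigroup

def IsResidueTrim (Λ Λ' : Set ℕ) : Prop :=
  Λ' ⊆ Λ ∧ ∀ x ∈ Λ \ Λ', sgFrobenius Λ < x ∧ x ≤ 2 * sgFrobenius Λ + sgMultiplicity Λ ∧
    ∃ μ, IsEffectiveGenerator Λ μ ∧ (x : ZMod (sgMultiplicity Λ)) = μ

theorem finite_setOf_isResidueTrim (Λ : Set ℕ) : {Λ' | IsResidueTrim Λ Λ'}.Finite :=
  (Set.finite_setOf_subset_diff_subset (Set.finite_Ioc (sgFrobenius Λ)
    (2 * sgFrobenius Λ + sgMultiplicity Λ))).subset fun _ ⟨hsub, hrem⟩ =>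
      ⟨hsub, fun x hx => ⟨(hrem x hx).1, (hrem x hx).2.1⟩⟩

namespace IsResidueTrim

variable {Λ Λ' : Set ℕ} {x : ℕ}

protected theorem rfl : IsResidueTrim Λ Λ := ⟨subset_rfl, by simp⟩

theorem mem_of_le_sgFrobenius (htrim : IsResidueTrim Λ Λ') {a : ℕ} (ha : a ∈ Λ)
    (haF : a ≤ sgFrobenius Λ) : a ∈ Λ' := by
  by_contra h
  exact (htrim.2 a ⟨ha, h⟩).1.not_ge haF

theorem mem_of_natCast_notMem (htrim : IsResidueTrim Λ Λ') (hfin : Λᶜ.Finite) {a : ℕ}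
    (haF : sgFrobenius Λ < a)
    (ha : (a : ZMod (sgMultiplicity Λ)) ∉ (↑) '' {μ | IsEffectiveGenerator Λ μ}) : a ∈ Λ' := by
  by_contra h
  obtain ⟨-, -, μ, hμ, haμ⟩ := htrim.2 a ⟨mem_of_sgFrobenius_lt hfin haF, h⟩
  exact ha ⟨μ, hμ, haμ.symm⟩

theorem exists_isEffectiveGenerator_natCast_eq (htrim : IsResidueTrim Λ Λ')
    (hfin : Λᶜ.Finite) (hmF : sgMultiplicity Λ < sgFrobenius Λ)
    (hx : IsMinimalGenerator Λ' x) (hFx : sgFrobenius Λ < x) :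
    ∃ μ, IsEffectiveGenerator Λ μ ∧ (x : ZMod (sgMultiplicity Λ)) = μ := by
  obtain ⟨hxΛ', hx0, hmin⟩ := hx
  obtain ⟨hm, hm0⟩ := sgMultiplicity_mem hfin
  have hm' : sgMultiplicity Λ ∈ Λ' := htrim.mem_of_le_sgFrobenius hm hmF.le
  have hxm : x - sgMultiplicity Λ ∉ Λ' := fun h => hmin ⟨_, hm', _, h, hm0, by omega, by omega⟩
  by_cases hxmΛ : x - sgMultiplicity Λ ∈ Λ
  · obtain ⟨-, -, μ, hμ, hμx⟩ := htrim.2 _ ⟨hxmΛ, hxm⟩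
    refine ⟨μ, hμ, ?_⟩
    rw [← hμx, Nat.cast_sub (by omega), ZMod.natCast_self, sub_zero]
  · have hxFm : x ≤ sgFrobenius Λ + sgMultiplicity Λ := not_lt.1 fun h =>
      hxmΛ (mem_of_sgFrobenius_lt hfin (by omega))
    refine ⟨x, ⟨⟨htrim.1 hxΛ', hx0, ?_⟩, hFx⟩, rfl⟩
    rintro ⟨a, ha, b, hb, ha0, hb0, hab⟩
    have := sgMultiplicity_le ha ha0
    have := sgMultiplicity_le hb hb0
    exact hmin ⟨a, htrim.mem_of_le_sgFrobenius ha (by omega), b,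
      htrim.mem_of_le_sgFrobenius hb (by omega), ha0, hb0, hab⟩

theorem le_of_isMinimalGenerator (htrim : IsResidueTrim Λ Λ') (hfin : Λᶜ.Finite)
    (he : 2 * {μ | IsEffectiveGenerator Λ μ}.ncard < sgMultiplicity Λ)
    (hx : IsMinimalGenerator Λ' x) : x ≤ 2 * sgFrobenius Λ + sgMultiplicity Λ := by
  obtain ⟨-, -, hmin⟩ := hx
  have : NeZero (sgMultiplicity Λ) := ⟨(sgMultiplicity_mem hfin).2⟩
  set S : Set (ZMod (sgMultiplicity Λ)) := (↑) '' {μ | IsEffectiveGenerator Λ μ}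
  have hS : 2 * S.ncard < Nat.card (ZMod (sgMultiplicity Λ)) := by
    have : S.ncard ≤ _ := Set.ncard_image_le (finite_setOf_isEffectiveGenerator hfin)
    rw [Nat.card_zmod]
    omega
  obtain ⟨u, hu, hxu⟩ := exists_notMem_and_sub_notMem S hS x
  set c := sgFrobenius Λ + 1 + (u - (sgFrobenius Λ + 1 : ℕ)).val
  have hcu : (c : ZMod (sgMultiplicity Λ)) = u := by
    simp only [c, Nat.cast_add, ZMod.natCast_zmod_val]
    ring
  have hcm : c ≤ sgFrobenius Λ + sgMultiplicity Λ := by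
    have := ZMod.val_lt (u - (sgFrobenius Λ + 1 : ℕ) : ZMod (sgMultiplicity Λ))
    omega
  by_contra! hbig
  have hc' : c ∈ Λ' := htrim.mem_of_natCast_notMem hfin (by omega) (hcu ▸ hu)
  have hxc' : x - c ∈ Λ' := htrim.mem_of_natCast_notMem hfin (by omega)
    (by rwa [Nat.cast_sub (by omega), hcu])
  exact hmin ⟨c, hc', x - c, hxc', by omega, by omega, by omega⟩

theorem of_isChildOf {Λ'' : Set ℕ} (htrim : IsResidueTrim Λ Λ') (hfin : Λᶜ.Finite)
    (he : 2 * {μ | IsEffectiveGenerator Λ μ}.ncard < sgMultiplicity Λ)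
    (hfin' : Λ'ᶜ.Finite) (hchild : IsChildOf Λ'' Λ') : IsResidueTrim Λ Λ'' := by
  obtain ⟨hx, hFx'⟩ := hchild.isEffectiveGenerator hfin'
  have hFx : sgFrobenius Λ < sgFrobenius Λ'' :=
    (sgFrobenius_le_sgFrobenius hfin' htrim.1).trans_lt hFx'
  refine ⟨hchild.2.1.1.trans htrim.1, fun y ⟨hyΛ, hy''⟩ => ?_⟩
  by_cases hy' : y ∈ Λ'
  · obtain rfl : y = sgFrobenius Λ'' := by
      rw [← hchild.2.2] at hy'
      exact hy'.resolve_left hy''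
    exact ⟨hFx, htrim.le_of_isMinimalGenerator hfin he hx,
      htrim.exists_isEffectiveGenerator_natCast_eq hfin (sgMultiplicity_lt_sgFrobenius hfin he) hx
        hFx⟩
  · exact htrim.2 y ⟨hyΛ, hy'⟩

end IsResidueTrim

theorem isNumericalSemigroup_of_mem_sgDescendants {Λ Λ' : Set ℕ} (h : Λ' ∈ sgDescendants Λ) :
    IsNumericalSemigroup Λ' := by
  obtain ⟨_, hchild, -⟩ := Relation.TransGen.head'_iff.1 h
  exact hchild.1

theorem isResidueTrim_of_mem_sgDescendants {Λ Λ' : Set ℕ} (hfin : Λᶜ.Finite)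
    (he : 2 * {μ | IsEffectiveGenerator Λ μ}.ncard < sgMultiplicity Λ)
    (h : Λ' ∈ sgDescendants Λ) : IsResidueTrim Λ Λ' := by
  induction h using Relation.TransGen.head_induction_on with
  | single hchild => exact IsResidueTrim.rfl.of_isChildOf hfin he hfin hchild
  | head hchild hdesc ih =>
    exact ih.of_isChildOf hfin he (isNumericalSemigroup_of_mem_sgDescendants hdesc).2.2 hchild

theorem stmt17 (Λ : Set ℕ) (hΛ : IsNumericalSemigroup Λ)
    (h : 2 * {μ : ℕ | IsEffectiveGenerator Λ μ}.ncard < sgMultiplicity Λ) :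
    (sgDescendants Λ).Finite :=
  (finite_setOf_isResidueTrim Λ).subset fun _ => isResidueTrim_of_mem_sgDescendants hΛ.2.2 h
end
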